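/- arXiv:1605.08402 — 2 statements merged into one kernel-verified Lean document; each statement's English description precedes it below -/
import Mathlib

section
/- If T : X → Φ(H) is a continuous family of Fredholm operators on a Hilbert space H parametrized by a compact topological space X, then there exists a finite dimensional subspace V ⊆ H such that im(T_λ) + V = H for all λ ∈ X. -/
/-- A bounded operator is Fredholm if its kernel is finite dimensional and its image is
closed and of finite codimension. -/
def IsFredholm {𝕜 E : Type*} [RCLike 𝕜] [NormedAddCommGroup E] [NormedSpace 𝕜 E]
    (T : E →L[𝕜] E) : Prop :=
  FiniteDimensional 𝕜 (LinearMap.ker (T : E →ₗ[𝕜] E)) ∧ IsClosed (LinearMap.range (T : E →ₗ[𝕜] E) : Set E) ∧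
    FiniteDimensional 𝕜 (E ⧸ LinearMap.range (T : E →ₗ[𝕜] E))

/-!
For a finite dimensional subspace `V`, the condition `im S + V = F` says that the operator
`(x, v) ↦ S x + v` from the Banach space `E × V` to `F` is surjective, and surjectivity is an open
condition on operators between Banach spaces: a small perturbation of a surjective operator is
still onto, by the quantitative open mapping theorem. Each `T λ` has finite codimensional range,
hence a finite dimensional complement `W λ`, which therefore still works near `λ`. Finitely many of
these neighbourhoods cover `X`, and the sum of the corresponding `W λ` works everywhere.
-/

open Function Metric Set

theorem Submodule.exists_finiteDimensional_sup_eq_top {K V : Type*} [DivisionRing K]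
    [AddCommGroup V] [Module K V] (p : Submodule K V) [FiniteDimensional K (V ⧸ p)] :
    ∃ q : Submodule K V, FiniteDimensional K q ∧ p ⊔ q = ⊤ := by
  obtain ⟨q, hq⟩ := p.exists_isCompl
  exact ⟨q, Module.Finite.equiv (p.quotientEquivOfIsCompl q hq), hq.sup_eq_top⟩

section

variable {𝕜 : Type*} [NontriviallyNormedField 𝕜]
  {E F : Type*} [NormedAddCommGroup E] [NormedSpace 𝕜 E] [CompleteSpace E]
  [NormedAddCommGroup F] [NormedSpace 𝕜 F] [CompleteSpace F]

theorem ContinuousLinearMap.isOpen_setOf_surjective :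
    IsOpen {f : E →L[𝕜] F | Surjective f} := by
  rw [Metric.isOpen_iff]
  intro f (hf : Surjective f)
  have hrange : LinearMap.range (f : E →ₗ[𝕜] F) = ⊤ := LinearMap.range_eq_top.2 hf
  set fsymm := f.nonlinearRightInverseOfSurjective hrange
  refine ⟨(fsymm.nnnorm : ℝ)⁻¹, inv_pos.2 (f.nonlinearRightInverseOfSurjective_nnnorm_pos hrange),
    fun g hg y => ?_⟩
  have happrox : ApproximatesLinearOn g f univ ‖g - f‖₊ := fun a _ b _ => by
    simpa [sub_sub_sub_comm] using (g - f).le_opNorm (a - b)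
  set gap := (fsymm.nnnorm : ℝ)⁻¹ - ‖g - f‖
  have hgap : 0 < gap := sub_pos.2 (by simpa [dist_eq_norm] using hg)
  have hy : y ∈ closedBall (g 0) (gap * (dist y (g 0) / gap)) := by
    rw [mul_div_cancel₀ _ hgap.ne']
    exact mem_closedBall.2 le_rfl
  obtain ⟨x, -, hx⟩ := happrox.surjOn_closedBall_of_nonlinearRightInverse fsymm
    (by positivity) (subset_univ _) hy
  exact ⟨x, hx⟩

variable [CompleteSpace 𝕜]

theorem Submodule.isOpen_setOf_range_sup_eq_top (V : Submodule 𝕜 F) [FiniteDimensional 𝕜 V] :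
    IsOpen {S : E →L[𝕜] F | LinearMap.range (S : E →ₗ[𝕜] F) ⊔ V = ⊤} := by
  have : CompleteSpace V := FiniteDimensional.complete 𝕜 V
  have hpre : {S : E →L[𝕜] F | LinearMap.range (S : E →ₗ[𝕜] F) ⊔ V = ⊤} =
      (fun S => S.coprod V.subtypeL) ⁻¹' {f | Surjective f} := by
    ext S
    change LinearMap.range (S : E →ₗ[𝕜] F) ⊔ V = ⊤ ↔ Surjective (S.coprod V.subtypeL)
    rw [← ContinuousLinearMap.coe_coe, ← LinearMap.range_eq_top, ContinuousLinearMap.range_coprod]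
    simp only [Submodule.toLinearMap_subtypeL, Submodule.range_subtype]
  rw [hpre]
  exact (ContinuousLinearMap.isOpen_setOf_surjective (𝕜 := 𝕜) (E := E × V) (F := F)).preimage <|
    (ContinuousLinearMap.coprodEquivL (E := E) (F := V) (G := F) 𝕜).continuous.comp
      (continuous_id.prodMk continuous_const)

theorem exists_finiteDimensional_range_sup_eq_top {X : Type*} [TopologicalSpace X]
    [CompactSpace X] (T : X → E →L[𝕜] F) (hT : Continuous T)
    (hcodim : ∀ x, FiniteDimensional 𝕜 (F ⧸ LinearMap.range (T x : E →ₗ[𝕜] F))) :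
    ∃ V : Submodule 𝕜 F, FiniteDimensional 𝕜 V ∧
      ∀ x, LinearMap.range (T x : E →ₗ[𝕜] F) ⊔ V = ⊤ := by
  choose W hWfd hW using fun x =>
    (LinearMap.range (T x : E →ₗ[𝕜] F)).exists_finiteDimensional_sup_eq_top
  obtain ⟨t, ht⟩ := isCompact_univ.elim_finite_subcover
    (fun x => T ⁻¹' {S | LinearMap.range (S : E →ₗ[𝕜] F) ⊔ W x = ⊤})
    (fun x => ((W x).isOpen_setOf_range_sup_eq_top).preimage hT)
    (fun x _ => mem_iUnion.2 ⟨x, hW x⟩)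
  refine ⟨t.sup W, inferInstance, fun x => top_unique ?_⟩
  obtain ⟨i, hi, hx⟩ := mem_iUnion₂.1 (ht (mem_univ x))
  exact hx.ge.trans (sup_le_sup_left (Finset.le_sup hi) _)

end

theorem stmt_6_general
    {H : Type*} [NormedAddCommGroup H] [InnerProductSpace ℂ H] [CompleteSpace H]
    {X : Type*} [TopologicalSpace X] [CompactSpace X]
    (T : X → H →L[ℂ] H) (hcont : Continuous T) (hFred : ∀ lam : X, IsFredholm (T lam)) :
    ∃ V : Submodule ℂ H, FiniteDimensional ℂ V ∧
      ∀ lam : X, LinearMap.range (T lam : H →ₗ[ℂ] H) ⊔ V = ⊤ :=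
  exists_finiteDimensional_range_sup_eq_top T hcont fun lam => (hFred lam).2.2

/-- If `T : X → Φ(H)` is a continuous family of Fredholm operators on a
separable complex Hilbert space `H` (with the norm topology), parametrized by a compact
topological space `X`, then there exists a finite dimensional subspace `V ⊆ H` with
`im(T_λ) + V = H` for all `λ ∈ X`. -/
theorem stmt_6
    {H : Type*} [NormedAddCommGroup H] [InnerProductSpace ℂ H] [CompleteSpace H]
    [TopologicalSpace.SeparableSpace H]
    {X : Type*} [TopologicalSpace X] [CompactSpace X]
    (T : X → H →L[ℂ] H) (hcont : Continuous T) (hFred : ∀ lam : X, IsFredholm (T lam)) :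
    ∃ V : Submodule ℂ H, FiniteDimensional ℂ V ∧
      ∀ lam : X, LinearMap.range (T lam : H →ₗ[ℂ] H) ⊔ V = ⊤ :=
  stmt_6_general T hcont hFred
end

section
/- Let X be a compact Hausdorff space. If the Čech cohomology group Ȟᵏ(X; G) is nonzero for some abelian group G and some k ≥ 0, then the covering dimension of X is at least k. -/
/-- A (not necessarily finite) open cover of a topological space. -/
structure OpenCover (X : Type) [TopologicalSpace X] where
  ι : Type
  U : ι → Set X
  isOpen : ∀ i, IsOpen (U i)
  covers : ∀ x : X, ∃ i, x ∈ U i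

variable {X : Type} [TopologicalSpace X]

/-- The `n`-simplices of the nerve of an open cover: `(n+1)`-tuples of indices whose
members have a common point. -/
def NerveSimplex (𝒰 : OpenCover X) (n : ℕ) : Type :=
  {σ : Fin (n + 1) → 𝒰.ι // (⋂ j, 𝒰.U (σ j)).Nonempty}

/-- Čech `n`-cochains of a cover with coefficients in `G`. -/
def CechCochain (𝒰 : OpenCover X) (G : Type) [AddCommGroup G] (n : ℕ) : Type :=
  NerveSimplex 𝒰 n → G

instance (𝒰 : OpenCover X) (G : Type) [AddCommGroup G] (n : ℕ) :
    AddCommGroup (CechCochain 𝒰 G n) := Pi.addCommGroup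

/-- The Čech coboundary operator. -/
def cechCoboundary (𝒰 : OpenCover X) (G : Type) [AddCommGroup G] (n : ℕ)
    (f : CechCochain 𝒰 G n) : CechCochain 𝒰 G (n + 1) :=
  fun σ => ∑ j : Fin (n + 2), (-1 : ℤ) ^ (j : ℕ) •
    f ⟨σ.1 ∘ j.succAbove, by
      obtain ⟨x, hx⟩ := σ.2
      exact ⟨x, Set.mem_iInter.2 fun i => Set.mem_iInter.1 hx _⟩⟩

/-- Restriction of cochains along a refinement map. -/
def cechRestrict {𝒰 𝒱 : OpenCover X} (r : 𝒱.ι → 𝒰.ι) (hr : ∀ j, 𝒱.U j ⊆ 𝒰.U (r j))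
    (G : Type) [AddCommGroup G] (n : ℕ) (f : CechCochain 𝒰 G n) : CechCochain 𝒱 G n :=
  fun σ => f ⟨r ∘ σ.1, by
    obtain ⟨x, hx⟩ := σ.2
    exact ⟨x, Set.mem_iInter.2 fun i => hr _ (Set.mem_iInter.1 hx i)⟩⟩

/-- A cochain is a coboundary if it is `δ` of a cochain of one degree lower (in degree `0`
this means that it is zero). -/
def IsCechCoboundary (𝒰 : OpenCover X) (G : Type) [AddCommGroup G] :
    (k : ℕ) → CechCochain 𝒰 G k → Prop
  | 0, f => f = 0
  | (n + 1), f => ∃ g : CechCochain 𝒰 G n, cechCoboundary 𝒰 G n g = f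

/-- The Čech cohomology `Ȟᵏ(X; G)`: cocycles on some open cover, where two cocycles are
identified whenever their restrictions to a common refinement differ by a coboundary. -/
def CechCohomology (X : Type) [TopologicalSpace X] (G : Type) [AddCommGroup G]
    (k : ℕ) : Type _ :=
  Quot (fun a b : Σ 𝒰 : OpenCover X, {f : CechCochain 𝒰 G k // cechCoboundary 𝒰 G k f = 0} =>
    ∃ (𝒲 : OpenCover X) (r : 𝒲.ι → a.1.ι) (hr : ∀ j, 𝒲.U j ⊆ a.1.U (r j))
      (s : 𝒲.ι → b.1.ι) (hs : ∀ j, 𝒲.U j ⊆ b.1.U (s j)),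
      IsCechCoboundary 𝒲 G k (cechRestrict r hr G k a.2.1 - cechRestrict s hs G k b.2.1))

/-- `X` has covering dimension at most `n`: every finite open cover admits a finite open
refinement in which no point lies in more than `n+1` sets. -/
def CovDimLE (X : Type) [TopologicalSpace X] (n : ℕ) : Prop :=
  ∀ (ι : Type) (U : ι → Set X), Finite ι → (∀ i, IsOpen (U i)) → (∀ x : X, ∃ i, x ∈ U i) →
    ∃ (κ : Type) (V : κ → Set X), Finite κ ∧ (∀ j, IsOpen (V j)) ∧
      (∀ x : X, ∃ j, x ∈ V j) ∧ (∀ j, ∃ i, V j ⊆ U i) ∧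
      ∀ x : X, {j | x ∈ V j}.ncard ≤ n + 1

/-!
Suppose `X` has covering dimension `≤ n < k`. A `k`-cocycle on an open cover becomes a coboundary
on a refinement: by compactness and the dimension bound the cover has a finite refinement in which
no point lies in more than `n + 1` sets, so every `k`-simplex of its nerve has a repeated vertex.
On the ordered chains of a simplex, coning off from the first vertex builds a chain homotopy
between the identity and the map that sorts each tuple (with the sign of the sorting permutation)
and kills tuples with a repeated vertex. The homotopy never leaves the vertex set of a simplex,
so it lives on the nerve, and in degree `k` it expresses each cocycle as the coboundary of its
composite with the homotopy. Hence `Ȟᵏ(X; G) = 0`.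
-/

open Finsupp Function Equiv

namespace Fin

variable {n : ℕ} {α : Type*}

/-- By the simplicial identity `δᵢ ∘ δⱼ = δ_{δᵢ j} ∘ δ_{j.predAbove i}`, the involution
`(i, j) ↦ (δᵢ j, j.predAbove i)` pairs off terms of opposite signs. -/
theorem sum_sum_neg_one_pow_smul_succAbove_comp_succAbove {M : Type*} [AddCommGroup M]
    (F : (Fin n → Fin (n + 2)) → M) :
    ∑ i : Fin (n + 2), ∑ j : Fin (n + 1),
      (-1 : ℤ) ^ ((i : ℕ) + j) • F (i.succAbove ∘ j.succAbove) = 0 := by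
  rw [← Finset.sum_product']
  refine Finset.sum_ninvolution (fun p => (p.1.succAbove p.2, p.2.predAbove p.1))
    (fun p => ?_) (fun p _ hp => ?_) (fun _ => Finset.mem_univ _) (fun p => ?_)
  · have hcomp : (p.1.succAbove p.2).succAbove ∘ (p.2.predAbove p.1).succAbove =
        p.1.succAbove ∘ p.2.succAbove :=
      funext (succAbove_succAbove_succAbove_predAbove p.1 p.2)
    simp only [hcomp, neg_one_pow_succAbove_add_predAbove, neg_smul, add_neg_cancel]
  · exact (succAbove_ne p.1 p.2 <| congrArg Prod.fst hp)
  · exact Prod.ext (succAbove_succAbove_predAbove p.1 p.2) (predAbove_predAbove_succAbove p.1 p.2)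

lemma comp_succAbove_castSucc_eq_comp_succAbove_succ {s : Fin (n + 2) → α} {i : Fin (n + 1)}
    (h : s i.castSucc = s i.succ) : s ∘ i.castSucc.succAbove = s ∘ i.succ.succAbove := by
  funext x
  rcases lt_trichotomy x i with hx | rfl | hx
  · simp [succAbove_castSucc_of_lt _ _ hx, succAbove_succ_of_le _ _ hx.le]
  · simp [h]
  · simp [succAbove_castSucc_of_le _ _ hx.le, succAbove_succ_of_lt _ _ hx]

lemma not_injective_comp_succAbove {s : Fin (n + 2) → α} {a b j : Fin (n + 2)}
    (hab : a ≠ b) (hs : s a = s b) (ha : a ≠ j) (hb : b ≠ j) :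
    ¬ Injective (s ∘ j.succAbove) := by
  obtain ⟨a', rfl⟩ := exists_succAbove_eq ha
  obtain ⟨b', rfl⟩ := exists_succAbove_eq hb
  exact fun hinj => hab (congrArg j.succAbove (hinj hs))

lemma exists_apply_castSucc_eq_apply_succ_of_not_injective [PartialOrder α] {s : Fin (n + 2) → α}
    (hs : Monotone s) (hinj : ¬ Injective s) : ∃ i : Fin (n + 1), s i.castSucc = s i.succ := by
  contrapose! hinj
  exact (strictMono_iff_lt_succ.2 fun i =>
    (hs castSucc_lt_succ.le).lt_of_ne (hinj i)).injective

end Fin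

namespace Equiv.Perm

variable {n : ℕ}

/-- Conjugating by cycle ranges turns `π` into a permutation fixing `0`, which is `ρ` on the
remaining entries. -/
theorem exists_comp_succAbove_eq (π : Perm (Fin (n + 1))) (i : Fin (n + 1)) :
    ∃ ρ : Perm (Fin n), (∀ x, π (i.succAbove x) = (π i).succAbove (ρ x)) ∧
      sign ρ = (-1) ^ ((i : ℕ) + π i) * sign π := by
  set π' := (π i).cycleRange * π * i.cycleRange⁻¹
  obtain ⟨⟨p, ρ⟩, hπ'⟩ := decomposeFin.symm.surjective π'
  have hp : p = 0 := by
    have := congrArg (· 0) hπ'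
    simp only [decomposeFin_symm_apply_zero] at this
    simp [this, π', Perm.mul_apply, Perm.inv_def, Fin.cycleRange_symm_zero]
  subst hp
  refine ⟨ρ, fun x => ?_, ?_⟩
  · have hx := congrArg (· x.succ) hπ'
    simp only [decomposeFin_symm_apply_succ, swap_self, refl_apply] at hx
    rw [← Fin.cycleRange_symm_succ, ← Fin.cycleRange_symm_succ, hx]
    simp [π', Perm.mul_apply, Perm.inv_def]
  · have hsign := congrArg sign hπ'
    rw [decomposeFin.symm_sign, if_pos rfl, one_mul] at hsign
    rw [hsign]
    simp only [π', map_mul, map_inv, Fin.sign_cycleRange, Int.units_inv_eq_self, pow_add]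
    ac_rfl

end Equiv.Perm

namespace Tuple

variable {n : ℕ} {α : Type*} [LinearOrder α]

theorem sort_comp_succAbove (f : Fin (n + 1) → α) (i : Fin (n + 1)) {ρ : Perm (Fin n)}
    (hρ : ∀ x, sort f (i.succAbove x) = (sort f i).succAbove (ρ x)) :
    sort (f ∘ (sort f i).succAbove) = ρ := by
  have hsort := (eq_sort_iff (σ := sort f) (f := f)).1 rfl
  refine ((eq_sort_iff).2 ⟨fun x y hxy => ?_, fun x y hxy hfxy => ?_⟩).symm
  · simpa [← hρ] using hsort.1 ((Fin.strictMono_succAbove i).monotone hxy)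
  · have := hsort.2 _ _ ((Fin.strictMono_succAbove i) hxy) (by simpa [← hρ] using hfxy)
    rwa [hρ, hρ, (Fin.strictMono_succAbove _).lt_iff_lt] at this

end Tuple

lemma Finsupp.map_mem_of_mem_supported {α R M : Type*} [Semiring R] [AddCommMonoid M]
    [Module R M] (f : (α →₀ R) →ₗ[R] M) {S : Set α} {P : Submodule R M}
    (h : ∀ a ∈ S, f (single a 1) ∈ P) {c : α →₀ R} (hc : c ∈ supported R R S) : f c ∈ P := by
  rw [supported_eq_span_single] at hc
  exact (Submodule.span_le (p := P.comap f)).2 (by rintro _ ⟨a, ha, rfl⟩; exact h a ha) hc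

/-- Ordered chains of the full simplex on `V`: an `m`-chain is a finite integral combination of
`(m + 1)`-tuples of vertices, repetitions allowed. -/
abbrev OrderedChain (V : Type*) (m : ℕ) : Type _ := (Fin (m + 1) → V) →₀ ℤ

namespace OrderedChain

noncomputable section

variable {V : Type*} {m : ℕ}

lemma linearMap_ext {M : Type*} [AddCommGroup M] {f g : OrderedChain V m →ₗ[ℤ] M}
    (h : ∀ σ, f (single σ 1) = g (single σ 1)) : f = g :=
  Finsupp.basisSingleOne.ext fun σ => by simpa using h σ

def boundary (m : ℕ) : OrderedChain V (m + 1) →ₗ[ℤ] OrderedChain V m :=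
  ∑ j : Fin (m + 2), (-1 : ℤ) ^ (j : ℕ) • lmapDomain ℤ ℤ (· ∘ j.succAbove)

lemma boundary_single (σ : Fin (m + 2) → V) :
    boundary m (single σ 1) =
      ∑ j : Fin (m + 2), (-1 : ℤ) ^ (j : ℕ) • single (σ ∘ j.succAbove) 1 := by
  simp [boundary, mapDomain_single]

theorem boundary_boundary (c : OrderedChain V (m + 2)) :
    boundary m (boundary (m + 1) c) = 0 := by
  suffices boundary m ∘ₗ boundary (m + 1) = 0 from LinearMap.congr_fun this c
  refine linearMap_ext fun σ => ?_
  simp only [LinearMap.comp_apply, boundary_single, map_sum, map_zsmul, Finset.smul_sum,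
    smul_smul, ← pow_add, LinearMap.zero_apply, Function.comp_assoc]
  exact Fin.sum_sum_neg_one_pow_smul_succAbove_comp_succAbove fun g => single (σ ∘ g) (1 : ℤ)

def cone (v : V) (m : ℕ) : OrderedChain V m →ₗ[ℤ] OrderedChain V (m + 1) :=
  lmapDomain ℤ ℤ fun τ => Fin.cons v τ

lemma cone_single (v : V) (τ : Fin (m + 1) → V) :
    cone v m (single τ 1) = single (Fin.cons v τ) 1 := by
  simp [cone, mapDomain_single]

theorem boundary_cone (v : V) (c : OrderedChain V (m + 1)) :
    boundary (m + 1) (cone v (m + 1) c) = c - cone v m (boundary m c) := by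
  suffices boundary (m + 1) ∘ₗ cone v (m + 1) = LinearMap.id - cone v m ∘ₗ boundary m from
    LinearMap.congr_fun this c
  refine linearMap_ext fun τ => ?_
  simp only [LinearMap.comp_apply, LinearMap.sub_apply, LinearMap.id_apply, cone_single,
    boundary_single, map_sum, map_zsmul, Fin.sum_univ_succ (n := m + 2)]
  simp only [Fin.val_zero, pow_zero, one_smul, Fin.succAbove_zero, Fin.cons_comp_succ,
    Fin.val_succ, pow_succ, mul_neg_one, neg_smul, Finset.sum_neg_distrib,
    Fin.cons_comp_succ_succAbove, sub_eq_add_neg]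
  rfl

def chainsIn (R : Set V) (m : ℕ) : Submodule ℤ (OrderedChain V m) :=
  supported ℤ ℤ {τ | Set.range τ ⊆ R}

variable {R : Set V}

lemma single_mem_chainsIn {τ : Fin (m + 1) → V} (h : Set.range τ ⊆ R) :
    single τ 1 ∈ chainsIn R m :=
  single_mem_supported ℤ 1 h

lemma boundary_mem_chainsIn {c : OrderedChain V (m + 1)} (hc : c ∈ chainsIn R (m + 1)) :
    boundary m c ∈ chainsIn R m := by
  refine map_mem_of_mem_supported _ (fun σ hσ => ?_) hc
  rw [boundary_single]
  exact Submodule.sum_mem _ fun j _ => Submodule.smul_mem _ _ <|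
    single_mem_chainsIn ((Set.range_comp_subset_range _ σ).trans hσ)

lemma cone_mem_chainsIn {v : V} (hv : v ∈ R) {c : OrderedChain V m} (hc : c ∈ chainsIn R m) :
    cone v m c ∈ chainsIn R (m + 1) := by
  refine map_mem_of_mem_supported _ (fun τ hτ => ?_) hc
  rw [cone_single]
  exact single_mem_chainsIn (by rw [Fin.range_cons]; exact Set.insert_subset hv hτ)

variable [LinearOrder V]

open Classical in
def injSingle (s : Fin (m + 1) → V) : OrderedChain V m := if Injective s then single s 1 else 0

/-- On monotone tuples `injSingle` commutes with the boundary: the two faces at a repeated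
entry coincide and cancel, and every other face keeps the repetition. -/
theorem boundary_injSingle_of_monotone {s : Fin (m + 2) → V} (hs : Monotone s) :
    boundary m (injSingle s) =
      ∑ i : Fin (m + 2), (-1 : ℤ) ^ (i : ℕ) • injSingle (s ∘ i.succAbove) := by
  by_cases hinj : Injective s
  · rw [injSingle, if_pos hinj, boundary_single]
    refine Finset.sum_congr rfl fun i _ => ?_
    rw [injSingle, if_pos (hinj.comp (Fin.succAbove_right_injective))]
  obtain ⟨i, hi⟩ := Fin.exists_apply_castSucc_eq_apply_succ_of_not_injective hs hinj
  have hne : i.castSucc ≠ i.succ := Fin.castSucc_lt_succ.ne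
  rw [injSingle, if_neg hinj, map_zero, Fintype.sum_eq_add _ _ hne,
    Fin.comp_succAbove_castSucc_eq_comp_succAbove_succ hi, Fin.val_castSucc, Fin.val_succ, pow_succ,
    mul_neg_one, neg_smul, add_neg_cancel]
  rintro j ⟨hj₁, hj₂⟩
  rw [injSingle, if_neg (Fin.not_injective_comp_succAbove hne hi hj₁.symm hj₂.symm), smul_zero]

def alternatingSort (m : ℕ) : OrderedChain V m →ₗ[ℤ] OrderedChain V m :=
  linearCombination ℤ fun σ => Perm.sign (Tuple.sort σ) • injSingle (σ ∘ Tuple.sort σ)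

lemma alternatingSort_single (σ : Fin (m + 1) → V) :
    alternatingSort m (single σ 1) = Perm.sign (Tuple.sort σ) • injSingle (σ ∘ Tuple.sort σ) := by
  simp [alternatingSort]

lemma alternatingSort_single_of_not_injective {σ : Fin (m + 1) → V} (hσ : ¬ Injective σ) :
    alternatingSort m (single σ 1) = 0 := by
  rw [alternatingSort_single, injSingle, if_neg fun h => hσ ((Equiv.injective_comp _ _).1 h),
    smul_zero]

lemma alternatingSort_zero (c : OrderedChain V 0) : alternatingSort 0 c = c := by
  suffices alternatingSort (V := V) 0 = LinearMap.id from LinearMap.congr_fun this c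
  refine linearMap_ext fun σ => ?_
  rw [alternatingSort_single, Subsingleton.elim (α := Perm (Fin 1)) (Tuple.sort σ) 1, injSingle,
    if_pos (Function.injective_of_subsingleton (α := Fin 1) _)]
  simp

lemma neg_one_pow_smul_alternatingSort_single_comp_succAbove (σ : Fin (m + 2) → V)
    (i : Fin (m + 2)) :
    (-1 : ℤ) ^ (Tuple.sort σ i : ℕ) •
        alternatingSort m (single (σ ∘ (Tuple.sort σ i).succAbove) 1) =
      Perm.sign (Tuple.sort σ) • (-1 : ℤ) ^ (i : ℕ) •
        injSingle (σ ∘ Tuple.sort σ ∘ i.succAbove) := by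
  obtain ⟨ρ, hρ, hsign⟩ := (Tuple.sort σ).exists_comp_succAbove_eq i
  have hcomp : σ ∘ (Tuple.sort σ i).succAbove ∘ ρ = σ ∘ Tuple.sort σ ∘ i.succAbove :=
    funext fun x => congrArg σ (hρ x).symm
  rw [alternatingSort_single, Tuple.sort_comp_succAbove σ i hρ, Function.comp_assoc, hcomp, hsign]
  simp only [Units.smul_def, smul_smul, Units.val_mul, Units.val_pow_eq_pow_val, Units.val_neg,
    Units.val_one, pow_add]
  congr 1
  have h := (Even.neg_one_pow ⟨_, rfl⟩ : (-1 : ℤ) ^ ((Tuple.sort σ i : ℕ) + Tuple.sort σ i) = 1)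
  rw [pow_add] at h
  linear_combination ((-1) ^ (i : ℕ) * (Perm.sign (Tuple.sort σ) : ℤ)) * h

theorem boundary_alternatingSort (c : OrderedChain V (m + 1)) :
    boundary m (alternatingSort (m + 1) c) = alternatingSort m (boundary m c) := by
  suffices boundary m ∘ₗ alternatingSort (m + 1) = alternatingSort m ∘ₗ boundary m from
    LinearMap.congr_fun this c
  refine linearMap_ext fun σ => ?_
  rw [LinearMap.comp_apply, LinearMap.comp_apply, alternatingSort_single, boundary_single, map_sum,
    ← Equiv.sum_comp (Tuple.sort σ)]
  simp only [map_zsmul, neg_one_pow_smul_alternatingSort_single_comp_succAbove]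
  rw [← Finset.smul_sum, Units.smul_def, Units.smul_def, map_zsmul,
    boundary_injSingle_of_monotone (Tuple.monotone_sort σ)]
  rfl

/-- Acyclic carriers: `σ - alternatingSort σ - homotopy (∂σ)` is a cycle (`boundary_homotopy`),
so coning it off from a vertex of `σ` fills it without leaving the vertex set of `σ`. -/
def homotopy : (m : ℕ) → OrderedChain V m →ₗ[ℤ] OrderedChain V (m + 1)
  | 0 => 0
  | m + 1 => linearCombination ℤ fun σ => cone (σ 0) (m + 1)
      (single σ 1 - alternatingSort (m + 1) (single σ 1) - homotopy m (boundary m (single σ 1)))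

lemma boundary_homotopy_succ_of_boundary_eq_zero
    (hcyc : ∀ c : OrderedChain V (m + 1),
      boundary m (c - alternatingSort (m + 1) c - homotopy m (boundary m c)) = 0)
    (c : OrderedChain V (m + 1)) :
    boundary (m + 1) (homotopy (m + 1) c) =
      c - alternatingSort (m + 1) c - homotopy m (boundary m c) := by
  suffices boundary (m + 1) ∘ₗ homotopy (m + 1) =
      LinearMap.id - alternatingSort (m + 1) - homotopy m ∘ₗ boundary m from
    LinearMap.congr_fun this c
  refine linearMap_ext fun σ => ?_
  simp only [homotopy, LinearMap.comp_apply, linearCombination_single, one_smul,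
    boundary_cone, hcyc, map_zero, sub_zero]
  rfl

theorem boundary_homotopy (c : OrderedChain V (m + 1)) :
    boundary (m + 1) (homotopy (m + 1) c) =
      c - alternatingSort (m + 1) c - homotopy m (boundary m c) := by
  induction m with
  | zero =>
    refine boundary_homotopy_succ_of_boundary_eq_zero (fun c => ?_) c
    rw [map_sub, map_sub, boundary_alternatingSort, alternatingSort_zero]
    simp [homotopy]
  | succ m ih =>
    refine boundary_homotopy_succ_of_boundary_eq_zero (fun c => ?_) c
    rw [map_sub, map_sub, boundary_alternatingSort, ih, boundary_boundary, map_zero, sub_zero]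
    abel

lemma alternatingSort_mem_chainsIn {c : OrderedChain V m} (hc : c ∈ chainsIn R m) :
    alternatingSort m c ∈ chainsIn R m := by
  refine map_mem_of_mem_supported _ (fun σ hσ => ?_) hc
  rw [alternatingSort_single, injSingle]
  split_ifs
  · exact Submodule.smul_of_tower_mem _ _ <|
      single_mem_chainsIn ((Set.range_comp_subset_range _ σ).trans hσ)
  · simp

theorem homotopy_mem_chainsIn {c : OrderedChain V m} (hc : c ∈ chainsIn R m) :
    homotopy m c ∈ chainsIn R (m + 1) := by
  induction m generalizing R with
  | zero => simp [homotopy]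
  | succ m ih =>
    refine map_mem_of_mem_supported _ (fun σ hσ => ?_) hc
    have hσ' : single σ 1 ∈ chainsIn (Set.range σ) (m + 1) := single_mem_chainsIn subset_rfl
    simp only [homotopy, linearCombination_single, one_smul]
    refine (supported_mono fun τ (hτ : Set.range τ ⊆ _) => hτ.trans hσ)
      (cone_mem_chainsIn (Set.mem_range_self 0) ?_)
    exact sub_mem (sub_mem hσ' (alternatingSort_mem_chainsIn hσ'))
      (ih (boundary_mem_chainsIn hσ'))

end

end OrderedChain

namespace OpenCover

/-- The tuples spanning a simplex of the nerve; `NerveSimplex 𝒰 m` is the corresponding subtype. -/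
def nerve (𝒰 : OpenCover X) (m : ℕ) : Set (Fin (m + 1) → 𝒰.ι) :=
  {τ | (⋂ j, 𝒰.U (τ j)).Nonempty}

lemma chainsIn_range_le_supported_nerve {𝒰 : OpenCover X} {m : ℕ} (σ : NerveSimplex 𝒰 m)
    (k : ℕ) : OrderedChain.chainsIn (Set.range σ.1) k ≤ supported ℤ ℤ (𝒰.nerve k) := by
  refine supported_mono fun τ (hτ : Set.range τ ⊆ _) => ?_
  obtain ⟨x, hx⟩ := σ.2
  refine ⟨x, Set.mem_iInter.2 fun i => ?_⟩
  obtain ⟨j, hj⟩ := hτ ⟨i, rfl⟩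
  exact hj ▸ Set.mem_iInter.1 hx j

end OpenCover

section Cech

open OrderedChain

variable {G : Type} [AddCommGroup G] {𝒰 : OpenCover X} {m : ℕ}

open Classical in
noncomputable def cechCochainEval (f : CechCochain 𝒰 G m) : OrderedChain 𝒰.ι m →ₗ[ℤ] G :=
  linearCombination ℤ fun τ => if h : τ ∈ 𝒰.nerve m then f ⟨τ, h⟩ else 0

lemma cechCochainEval_single (f : CechCochain 𝒰 G m) (σ : NerveSimplex 𝒰 m) :
    cechCochainEval f (single σ.1 1) = f σ := by
  simp only [cechCochainEval, linearCombination_single, one_smul]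
  exact dif_pos σ.2

lemma cechCochainEval_boundary_eq_zero {f : CechCochain 𝒰 G m}
    (hf : cechCoboundary 𝒰 G m f = 0) {c : OrderedChain 𝒰.ι (m + 1)}
    (hc : c ∈ supported ℤ ℤ (𝒰.nerve (m + 1))) : cechCochainEval f (boundary m c) = 0 := by
  refine (Submodule.mem_bot ℤ).1 <|
    map_mem_of_mem_supported (cechCochainEval f ∘ₗ boundary m) (fun σ hσ => ?_) hc
  rw [Submodule.mem_bot, LinearMap.comp_apply, boundary_single, map_sum]
  refine Eq.trans (Finset.sum_congr rfl fun j _ => ?_) (congrFun hf ⟨σ, hσ⟩)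
  rw [map_zsmul, cechCochainEval_single f ⟨_, _⟩]

/-- `alternatingSort` kills every `(m + 1)`-simplex of the nerve, so evaluating the cocycle on
the homotopy gives a primitive. -/
theorem isCechCoboundary_of_forall_not_injective
    (h𝒰 : ∀ σ : NerveSimplex 𝒰 (m + 1), ¬ Injective σ.1) {f : CechCochain 𝒰 G (m + 1)}
    (hf : cechCoboundary 𝒰 G (m + 1) f = 0) : IsCechCoboundary 𝒰 G (m + 1) f := by
  let : LinearOrder 𝒰.ι := IsWellOrder.linearOrder WellOrderingRel
  refine ⟨fun τ => cechCochainEval f (homotopy m (single τ.1 1)), funext fun σ => ?_⟩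
  have hσ : single σ.1 1 ∈ chainsIn (Set.range σ.1) (m + 1) := single_mem_chainsIn subset_rfl
  have hsupp := OpenCover.chainsIn_range_le_supported_nerve σ _ (homotopy_mem_chainsIn hσ)
  calc cechCoboundary 𝒰 G m (fun τ => cechCochainEval f (homotopy m (single τ.1 1))) σ
      = cechCochainEval f (homotopy m (boundary m (single σ.1 1))) := by
        simp only [cechCoboundary, boundary_single, map_sum, map_zsmul]
    _ = cechCochainEval f (single σ.1 1 - alternatingSort (m + 1) (single σ.1 1) -
          boundary (m + 1) (homotopy (m + 1) (single σ.1 1))) := by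
        rw [boundary_homotopy, sub_sub_cancel]
    _ = f σ := by
        rw [map_sub, map_sub, alternatingSort_single_of_not_injective (h𝒰 σ),
          cechCochainEval_boundary_eq_zero hf hsupp, cechCochainEval_single, map_zero, sub_zero,
          sub_zero]

end Cech

lemma cechCoboundary_cechRestrict {𝒰 𝒱 : OpenCover X} (r : 𝒱.ι → 𝒰.ι)
    (hr : ∀ j, 𝒱.U j ⊆ 𝒰.U (r j)) (G : Type) [AddCommGroup G] (m : ℕ) (f : CechCochain 𝒰 G m) :
    cechCoboundary 𝒱 G m (cechRestrict r hr G m f) =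
      cechRestrict r hr G (m + 1) (cechCoboundary 𝒰 G m f) :=
  rfl

theorem CechCohomology.subsingleton_of_forall_exists_isCechCoboundary {G : Type} [AddCommGroup G]
    {k : ℕ} (h : ∀ (𝒰 : OpenCover X) (f : CechCochain 𝒰 G k), cechCoboundary 𝒰 G k f = 0 →
      ∃ (𝒱 : OpenCover X) (r : 𝒱.ι → 𝒰.ι) (hr : ∀ j, 𝒱.U j ⊆ 𝒰.U (r j)),
        IsCechCoboundary 𝒱 G k (cechRestrict r hr G k f)) :
    Subsingleton (CechCohomology X G k) := by
  let 𝒰₀ : OpenCover X := ⟨Unit, fun _ => Set.univ, fun _ => isOpen_univ, fun _ => ⟨(), trivial⟩⟩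
  have h₀ : cechCoboundary 𝒰₀ G k 0 = 0 :=
    funext fun _ => Finset.sum_eq_zero fun _ _ => smul_zero _
  suffices hmk : ∀ a, Quot.mk _ a = (Quot.mk _ ⟨𝒰₀, 0, h₀⟩ : CechCohomology X G k) from
    ⟨Quot.ind fun a => Quot.ind fun b => (hmk a).trans (hmk b).symm⟩
  rintro ⟨𝒰, f, hf⟩
  obtain ⟨𝒱, r, hr, hcob⟩ := h 𝒰 f hf
  refine Quot.sound ⟨𝒱, r, hr, fun _ => (), fun _ => Set.subset_univ _, ?_⟩
  rwa [show cechRestrict _ _ G k (0 : CechCochain 𝒰₀ G k) = 0 from rfl, sub_zero]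

theorem CovDimLE.exists_refinement [CompactSpace X] {n : ℕ} (hX : CovDimLE X n)
    (𝒰 : OpenCover X) :
    ∃ (𝒱 : OpenCover X) (r : 𝒱.ι → 𝒰.ι), (∀ j, 𝒱.U j ⊆ 𝒰.U (r j)) ∧
      ∀ {m : ℕ} (σ : NerveSimplex 𝒱 m), Injective σ.1 → m ≤ n := by
  obtain ⟨t, ht⟩ := isCompact_univ.elim_finite_subcover 𝒰.U 𝒰.isOpen
    fun x _ => Set.mem_iUnion.2 (𝒰.covers x)
  obtain ⟨κ, V, hκ, hVopen, hVcover, hVrefines, hVorder⟩ := hX t (fun i => 𝒰.U i) inferInstance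
    (fun i => 𝒰.isOpen i) fun x => by
      obtain ⟨i, hi, hx⟩ := Set.mem_iUnion₂.1 (ht (Set.mem_univ x))
      exact ⟨⟨i, hi⟩, hx⟩
  choose r hr using hVrefines
  refine ⟨⟨κ, V, hVopen, hVcover⟩, fun j => (r j).1, hr, fun {m} σ hσ => ?_⟩
  obtain ⟨x, hx⟩ := σ.2
  have hcard := Nat.card_le_card_of_injective (fun i : Fin (m + 1) =>
    (⟨σ.1 i, Set.mem_iInter.1 hx i⟩ : {j | x ∈ V j})) fun i i' h => hσ (congrArg Subtype.val h)
  rw [Nat.card_eq_fintype_card, Fintype.card_fin, Nat.card_coe_set_eq] at hcard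
  exact Nat.le_of_succ_le_succ (hcard.trans (hVorder x))

theorem stmt_16_general (X : Type) [TopologicalSpace X] [CompactSpace X]
    (G : Type) [AddCommGroup G] (k : ℕ) (h : Nontrivial (CechCohomology X G k)) :
    ∀ n : ℕ, CovDimLE X n → k ≤ n := by
  intro n hX
  by_contra! hnk
  obtain ⟨m, rfl⟩ : ∃ m, k = m + 1 := ⟨k - 1, by omega⟩
  refine not_subsingleton (CechCohomology X G (m + 1))
    (CechCohomology.subsingleton_of_forall_exists_isCechCoboundary fun 𝒰 f hf => ?_)
  obtain ⟨𝒱, r, hr, hdim⟩ := hX.exists_refinement 𝒰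
  refine ⟨𝒱, r, hr, isCechCoboundary_of_forall_not_injective
    (fun σ hσ => (hdim σ hσ).not_gt hnk) ?_⟩
  rw [cechCoboundary_cechRestrict, hf]
  rfl

/-- Let `X` be a compact Hausdorff space. If the Čech cohomology group
`Ȟᵏ(X; G)` is nonzero (i.e. nontrivial) for some abelian group `G` and some `k ≥ 0`, then
the covering dimension of `X` is at least `k`, i.e. `X` has covering dimension `≤ n` only
for `n ≥ k`. -/
theorem stmt_16 (X : Type) [TopologicalSpace X] [CompactSpace X] [T2Space X]
    (G : Type) [AddCommGroup G] (k : ℕ) (h : Nontrivial (CechCohomology X G k)) :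
    ∀ n : ℕ, CovDimLE X n → k ≤ n :=
  stmt_16_general X G k h
end
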